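/- Let n₁ ≥ n₂ be natural numbers and m₁, m₂₁ natural numbers with m₁ + m₂₁ ≤ n₁ and m₂₁ ≤ n₂. Let F₁ be an invertible m₁ × m₁ matrix and F₂₁ an invertible m₂₁ × m₂₁ matrix over 𝔽₂, and define the n₁ × m₁ matrix G₁ = [0^{(n₁ − m₁ − m₂₁) × m₁}; F₁; 0^{m₂₁ × m₁}] and the n₁ × m₂₁ matrix G₂₁ = [0^{(n₂ − m₂₁) × m₂₁}; F₂₁; 0^{(n₁ − n₂) × m₂₁}]. Then, with S the n₁ × n₁ down-shift matrix, rank([G₁ | S^{n₁ − n₂} G₂₁]) − rank(S^{n₁ − n₂} G₂₁) = m₁ and rank([G₁ | S^{n₁ − n₂} G₂₁]) − rank(G₁) = m₂₁; i.e., under treating-interference-as-noise each of the two users of the deterministic multiple access channel achieves exactly its designed number of bits m₁ and m₂₁, respectively. -/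

import Mathlib

/-!
`S^(n₁ - n₂)` slides the block `F₂₁` down to the bottom rows `n₁ - m₂₁, …, n₁ - 1`, right
below the rows `n₁ - m₁ - m₂₁, …, n₁ - m₂₁ - 1` carrying `F₁`. Restricted to these two
disjoint row windows, `[G₁ | S^(n₁ - n₂) G₂₁]` is the invertible matrix `diag(F₁, F₂₁)`, so it
has full column rank `m₁ + m₂₁`, while `G₁` and `S^(n₁ - n₂) G₂₁` have ranks `m₁` and `m₂₁`.
-/

open Matrix

noncomputable section

/-- The `q × q` down-shift matrix over `𝔽₂`: `S i j = 1` iff `i = j + 1`. -/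
def shiftMatrix (q : ℕ) : Matrix (Fin q) (Fin q) (ZMod 2) :=
  Matrix.of fun i j => if (i : ℕ) = (j : ℕ) + 1 then 1 else 0

/-- The `q × mm` vertical block matrix whose rows `off, …, off + mm - 1` form `F`
and whose other rows are zero. -/
def blockAt (q mm off : ℕ) (F : Matrix (Fin mm) (Fin mm) (ZMod 2)) :
    Matrix (Fin q) (Fin mm) (ZMod 2) :=
  Matrix.of fun i j =>
    if h : off ≤ (i : ℕ) ∧ (i : ℕ) < off + mm then F ⟨(i : ℕ) - off, by omega⟩ j else 0

theorem Matrix.rank_eq_card_of_isUnit_submatrix {R m n : Type*} [CommSemiring R]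
    [StrongRankCondition R] [Fintype n] [DecidableEq n]
    (A : Matrix m n R) (r : n → m) (h : IsUnit (A.submatrix r id)) :
    A.rank = Fintype.card n :=
  le_antisymm A.rank_le_card_width (rank_of_isUnit _ h ▸ A.rank_submatrix_le r id)

theorem shiftMatrix_mul_apply {q : ℕ} {ι : Type*} (M : Matrix (Fin q) ι (ZMod 2))
    (i : Fin q) (j : ι) :
    (shiftMatrix q * M) i j = if h : 1 ≤ (i : ℕ) then M ⟨(i : ℕ) - 1, by omega⟩ j else 0 := by
  rw [mul_apply]
  split_ifs with h
  · rw [Finset.sum_eq_single ⟨(i : ℕ) - 1, by omega⟩]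
    · rw [shiftMatrix, of_apply, if_pos (by simp; omega), one_mul]
    · intro k _ hk
      have : (i : ℕ) ≠ k + 1 := fun hik => hk (Fin.ext (by simp; omega))
      simp [shiftMatrix, this]
    · simp
  · refine Finset.sum_eq_zero fun k _ => ?_
    simp [shiftMatrix, show (i : ℕ) ≠ k + 1 by omega]

theorem shiftMatrix_mul_blockAt {q mm off : ℕ}
    (F : Matrix (Fin mm) (Fin mm) (ZMod 2)) :
    shiftMatrix q * blockAt q mm off F = blockAt q mm (off + 1) F := by
  ext i j
  rw [shiftMatrix_mul_apply]
  simp only [blockAt, of_apply]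
  by_cases h1 : 1 ≤ (i : ℕ)
  · by_cases h2 : off ≤ (i : ℕ) - 1 ∧ (i : ℕ) - 1 < off + mm
    · rw [dif_pos h1, dif_pos h2, dif_pos (by omega)]
      congr 2
      omega
    · rw [dif_pos h1, dif_neg h2, dif_neg (by omega)]
  · rw [dif_neg h1, dif_neg (by omega)]

theorem shiftMatrix_pow_mul_blockAt {q mm off : ℕ} (r : ℕ)
    (F : Matrix (Fin mm) (Fin mm) (ZMod 2)) :
    shiftMatrix q ^ r * blockAt q mm off F = blockAt q mm (off + r) F := by
  induction r with
  | zero => simp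
  | succ k ih =>
    rw [pow_succ', Matrix.mul_assoc, ih, shiftMatrix_mul_blockAt, add_assoc]

theorem blockAt_apply_of_lt {q mm off : ℕ} (F : Matrix (Fin mm) (Fin mm) (ZMod 2))
    {i : Fin q} (hi : (i : ℕ) < off) (j : Fin mm) : blockAt q mm off F i j = 0 :=
  dif_neg (by omega)

theorem blockAt_apply_of_le {q mm off : ℕ} (F : Matrix (Fin mm) (Fin mm) (ZMod 2))
    {i : Fin q} (hi : off + mm ≤ (i : ℕ)) (j : Fin mm) : blockAt q mm off F i j = 0 :=
  dif_neg (by omega)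

theorem blockAt_submatrix_natAdd {q mm off : ℕ} (h : off + mm ≤ q)
    (F : Matrix (Fin mm) (Fin mm) (ZMod 2)) :
    (blockAt q mm off F).submatrix (Fin.castLE h ∘ Fin.natAdd off) id = F := by
  ext i j
  simp only [blockAt, submatrix_apply, Function.comp_apply, id, of_apply, Fin.val_castLE,
    Fin.val_natAdd]
  rw [dif_pos (by omega)]
  congr 2
  omega

theorem rank_blockAt {q mm off : ℕ} (h : off + mm ≤ q)
    {F : Matrix (Fin mm) (Fin mm) (ZMod 2)} (hF : IsUnit F) :
    (blockAt q mm off F).rank = mm := by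
  rw [rank_eq_card_of_isUnit_submatrix _ _ ((blockAt_submatrix_natAdd h F).symm ▸ hF),
    Fintype.card_fin]

theorem rank_fromCols_blockAt {q m₁ m₂ a b : ℕ} (hab : a + m₁ ≤ b) (hb : b + m₂ ≤ q)
    {F₁ : Matrix (Fin m₁) (Fin m₁) (ZMod 2)} {F₂ : Matrix (Fin m₂) (Fin m₂) (ZMod 2)}
    (hF₁ : IsUnit F₁) (hF₂ : IsUnit F₂) :
    (fromCols (blockAt q m₁ a F₁) (blockAt q m₂ b F₂)).rank = m₁ + m₂ := by
  set rows : Fin m₁ ⊕ Fin m₂ → Fin q :=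
    Sum.elim (Fin.castLE (by omega) ∘ Fin.natAdd a) (Fin.castLE hb ∘ Fin.natAdd b)
  have hdiag : (fromCols (blockAt q m₁ a F₁) (blockAt q m₂ b F₂)).submatrix rows id =
      fromBlocks F₁ 0 0 F₂ := by
    ext (i | i) (j | j)
    · exact congr_fun₂ (blockAt_submatrix_natAdd _ F₁) i j
    · exact blockAt_apply_of_lt F₂ (by simp [rows]; omega) j
    · exact blockAt_apply_of_le F₁ (by simp [rows]; omega) j
    · exact congr_fun₂ (blockAt_submatrix_natAdd hb F₂) i j
  rw [rank_eq_card_of_isUnit_submatrix _ rows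
      (hdiag ▸ isUnit_fromBlocks_zero₂₁.mpr ⟨hF₁, hF₂⟩),
    Fintype.card_sum, Fintype.card_fin, Fintype.card_fin]

/-- Under TIN, each of the two users of the deterministic MAC achieves exactly its
designed number of bits `m₁` and `m₂₁`. -/
theorem tin_rates_two_user (n₁ n₂ m₁ m₂₁ : ℕ) (hn : n₂ ≤ n₁)
    (hm₁ : m₁ + m₂₁ ≤ n₁) (hm₂ : m₂₁ ≤ n₂)
    (F₁ : Matrix (Fin m₁) (Fin m₁) (ZMod 2))
    (F₂₁ : Matrix (Fin m₂₁) (Fin m₂₁) (ZMod 2))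
    (hF₁ : IsUnit F₁) (hF₂₁ : IsUnit F₂₁) :
    (Matrix.fromCols
        (blockAt n₁ m₁ (n₁ - m₁ - m₂₁) F₁)
        (shiftMatrix n₁ ^ (n₁ - n₂) * blockAt n₁ m₂₁ (n₂ - m₂₁) F₂₁)).rank
        - (shiftMatrix n₁ ^ (n₁ - n₂) * blockAt n₁ m₂₁ (n₂ - m₂₁) F₂₁).rank = m₁ ∧
    (Matrix.fromCols
        (blockAt n₁ m₁ (n₁ - m₁ - m₂₁) F₁)
        (shiftMatrix n₁ ^ (n₁ - n₂) * blockAt n₁ m₂₁ (n₂ - m₂₁) F₂₁)).rank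
        - (blockAt n₁ m₁ (n₁ - m₁ - m₂₁) F₁).rank = m₂₁ := by
  have hshift : shiftMatrix n₁ ^ (n₁ - n₂) * blockAt n₁ m₂₁ (n₂ - m₂₁) F₂₁ =
      blockAt n₁ m₂₁ (n₁ - m₂₁) F₂₁ := by
    rw [shiftMatrix_pow_mul_blockAt, show n₂ - m₂₁ + (n₁ - n₂) = n₁ - m₂₁ by omega]
  rw [hshift, rank_fromCols_blockAt (by omega) (by omega) hF₁ hF₂₁,
    rank_blockAt (by omega) hF₁, rank_blockAt (by omega) hF₂₁]
  omega

end
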